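/- For every L ≥ 2 and all widths n_0, n_1, …, n_{L−1} ≥ 1, the matrix-computation upper bound on the number of linear regions computed with γ^{ours} is at most the one computed with γ^{serra}: ‖B^{(γ^{ours})}_{n_{L−1}} M_{n_{L−2},n_{L−1}} ⋯ B^{(γ^{ours})}_{n_1} M_{n_0,n_1} e^{n_0}‖₁ ≤ ‖B^{(γ^{serra})}_{n_{L−1}} M_{n_{L−2},n_{L−1}} ⋯ B^{(γ^{serra})}_{n_1} M_{n_0,n_1} e^{n_0}‖₁, where ‖·‖₁ is the sum of entries. -/

import Mathlib

open scoped Classical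

noncomputable section

/-- Tail sum `Σ_{j ≥ J} v j` of a finitely supported histogram `v : ℕ →₀ ℕ`. -/
def tailSum (v : ℕ →₀ ℕ) (J : ℕ) : ℕ :=
  ∑ j ∈ v.support.filter (fun j => J ≤ j), v j

/-- Order relation on histograms: `v ≼ w` iff every tail sum of `v` is at most that of `w`. -/
def HistLE (v w : ℕ →₀ ℕ) : Prop :=
  ∀ J : ℕ, tailSum v J ≤ tailSum w J

/-- Downward move: `dm v 0 = 0` and `dm v (i+1) = v i`. -/
def dm (v : ℕ →₀ ℕ) : ℕ →₀ ℕ :=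
  Finsupp.embDomain ⟨Nat.succ, Nat.succ_injective⟩ v

/-- Clipping `cl_k`: keeps values below `k`, puts the tail sum at `k`, zero above `k`. -/
def clip (k : ℕ) (v : ℕ →₀ ℕ) : ℕ →₀ ℕ :=
  Finsupp.onFinset (Finset.range (k + 1))
    (fun i => if i < k then v i else if i = k then tailSum v k else 0)
    (by
      intro a ha
      simp only [Finset.mem_range]
      by_contra hc
      push_neg at hc
      have h1 : ¬ a < k := by omega
      have h2 : a ≠ k := by omega
      simp [h1, h2] at ha)

/-- The histogram `γ_{1,n'}`: value 1 at `n'`, value 2 at `⌈n'/2⌉, …, n'-1`,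
value `n' % 2` at `⌈n'/2⌉ - 1`, and 0 elsewhere. -/
def gammaOne (n' : ℕ) : ℕ →₀ ℕ :=
  Finsupp.onFinset (Finset.range (n' + 1))
    (fun i =>
      if i = n' then 1
      else if (n' + 1) / 2 ≤ i ∧ i < n' then 2
      else if i + 1 = (n' + 1) / 2 then n' % 2
      else 0)
    (by
      intro a ha
      simp only [Finset.mem_range]
      by_contra hc
      push_neg at hc
      have h1 : a ≠ n' := by omega
      have h2 : ¬ ((n' + 1) / 2 ≤ a ∧ a < n') := by omega
      have h3 : a + 1 ≠ (n' + 1) / 2 := by omega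
      simp [h1, h2, h3] at ha)

/-- Auxiliary column-major definition of `γ^{ours}`: `gammaOursAux n' n = γ^{ours}_{n,n'}`,
with the convention `γ_{n,n'} = γ_{n',n'}` for `n > n'` built in via the `min`s. -/
def gammaOursAux : ℕ → ℕ → (ℕ →₀ ℕ)
  | _, 0 => Finsupp.single 0 1
  | n', 1 => gammaOne n'
  | 0, _ + 2 => 0
  | 1, _ + 2 => gammaOne 1
  | n' + 1, nn + 2 =>
      gammaOursAux n' (min (nn + 1) n') + dm (gammaOursAux n' (min (nn + 2) n'))

/-- `γ^{ours}_{n,n'}`. -/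
def gammaOurs (n n' : ℕ) : ℕ →₀ ℕ := gammaOursAux n' n

/-- `γ^{serra}_{n,n'}`: `i ↦ binomial(n', i)` for `n' - n ≤ i ≤ n'`, and 0 otherwise. -/
def gammaSerra (n n' : ℕ) : ℕ →₀ ℕ :=
  Finsupp.onFinset (Finset.range (n' + 1))
    (fun i => if n' - n ≤ i ∧ i ≤ n' then Nat.choose n' i else 0)
    (by
      intro a ha
      simp only [Finset.mem_range]
      by_contra hc
      push_neg at hc
      have h1 : ¬ (n' - n ≤ a ∧ a ≤ n') := by omega
      exact ha (by rw [if_neg h1]))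

/-- `ℓ₁`-norm (sum of entries) of a histogram. -/
def l1 (v : ℕ →₀ ℕ) : ℕ := ∑ j ∈ v.support, v j

/-- The action of the matrix `B^{(γ)}_{n'}` on a histogram supported on `{0, …, n'}`:
`(B v)(i) = Σ_{j=0}^{n'} v(j) ⬝ (cl_j(γ_{j,n'}))(i)`. -/
def Bop (γ : ℕ → ℕ → (ℕ →₀ ℕ)) (n' : ℕ) (v : ℕ →₀ ℕ) : ℕ →₀ ℕ :=
  ∑ j ∈ Finset.range (n' + 1), v j • clip j (γ j n')

/-- `iterBound γ n i` is the histogram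
`B^{(γ)}_{n_i} M_{n_{i-1},n_i} ⋯ B^{(γ)}_{n_1} M_{n_0,n_1} e^{n_0}`, where the action of
`M_{n,n'}` on a histogram supported on `{0, …, n}` is the clipping `cl_{n'}`. -/
def iterBound (γ : ℕ → ℕ → (ℕ →₀ ℕ)) (n : ℕ → ℕ) : ℕ → (ℕ →₀ ℕ)
  | 0 => Finsupp.single (n 0) 1
  | i + 1 => Bop γ (n (i + 1)) (clip (n (i + 1)) (iterBound γ n i))

/-!
Histograms are compared by the dominance order `HistLE` (every tail sum is smaller); the `ℓ¹`
norm is the tail sum at `0`. Pascal's rule says that `γ^{serra}` satisfies the recursion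
defining `γ^{ours}` with equality, so `γ^{ours}_{n,n'} ≼ γ^{serra}_{n,n'}` by induction on `n'`;
in the base case `n = 1` both histograms have mass `n' + 1` and agree at `n'`.

The tail sums of `B^{(γ)} v` are `∑ⱼ v(j) b(j)`, where `b(j)` is the tail sum of the clipped
column `cl_j(γ_{j,n'})`. For `γ^{serra}` the weights `b` increase with `j`, and Abel summation
turns tail domination of `v` into domination of `∑ⱼ v(j) b(j)`. Hence every `B`-step, and every
clipping, preserves `≼`, and induction along the layers concludes.
-/

lemma tailSum_eq_sum_Ico {v : ℕ →₀ ℕ} {N : ℕ} (hv : v.support ⊆ Finset.range N) (J : ℕ) :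
    tailSum v J = ∑ i ∈ Finset.Ico J N, v i := by
  refine Finset.sum_subset (fun i hi => ?_) (fun i hiIco hi => ?_)
  · rw [Finset.mem_filter] at hi
    exact Finset.mem_Ico.2 ⟨hi.2, Finset.mem_range.1 (hv hi.1)⟩
  · by_contra h
    exact hi (Finset.mem_filter.2 ⟨Finsupp.mem_support_iff.2 h, (Finset.mem_Ico.1 hiIco).1⟩)

lemma l1_eq_tailSum_zero (v : ℕ →₀ ℕ) : l1 v = tailSum v 0 := by
  rw [l1, tailSum, Finset.filter_true_of_mem fun x _ => Nat.zero_le x]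

lemma tailSum_add (v w : ℕ →₀ ℕ) (J : ℕ) :
    tailSum (v + w) J = tailSum v J + tailSum w J := by
  obtain ⟨N, hN⟩ := Finset.exists_nat_subset_range (v.support ∪ w.support)
  rw [tailSum_eq_sum_Ico (Finsupp.support_add.trans hN),
    tailSum_eq_sum_Ico (Finset.subset_union_left.trans hN),
    tailSum_eq_sum_Ico (Finset.subset_union_right.trans hN), ← Finset.sum_add_distrib]
  rfl

def tailSumHom (J : ℕ) : (ℕ →₀ ℕ) →+ ℕ where
  toFun v := tailSum v J
  map_zero' := by simp [tailSum]
  map_add' v w := tailSum_add v w J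

lemma tailSum_antitone (v : ℕ →₀ ℕ) : Antitone (tailSum v) :=
  fun _ _ hJ => Finset.sum_le_sum_of_subset fun _ hi => by
    rw [Finset.mem_filter] at hi ⊢
    exact ⟨hi.1, hJ.trans hi.2⟩

lemma tailSum_single (a c J : ℕ) :
    tailSum (Finsupp.single a c) J = if J ≤ a then c else 0 := by
  rw [tailSum_eq_sum_Ico (Finsupp.support_single_subset.trans
    (by simp : {a} ⊆ Finset.range (a + 1))) J]
  simp [Finsupp.single_apply]

lemma clip_apply (k : ℕ) (v : ℕ →₀ ℕ) (i : ℕ) :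
    clip k v i = if i < k then v i else if i = k then tailSum v k else 0 := rfl

lemma support_clip_subset (k : ℕ) (v : ℕ →₀ ℕ) : (clip k v).support ⊆ Finset.range (k + 1) :=
  Finsupp.support_onFinset_subset

lemma tailSum_clip (k : ℕ) (v : ℕ →₀ ℕ) (J : ℕ) :
    tailSum (clip k v) J = if J ≤ k then tailSum v J else 0 := by
  rw [tailSum_eq_sum_Ico (support_clip_subset k v)]
  split_ifs with hJ
  · obtain ⟨N, hN⟩ := Finset.exists_nat_subset_range v.support
    have hN' : v.support ⊆ Finset.range (N + k) :=
      hN.trans (Finset.range_subset_range.2 (Nat.le_add_right N k))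
    rw [Finset.sum_Ico_succ_top hJ, tailSum_eq_sum_Ico hN',
      ← Finset.sum_Ico_consecutive _ hJ (Nat.le_add_left k N)]
    congr 1
    · exact Finset.sum_congr rfl fun i hi => if_pos (Finset.mem_Ico.1 hi).2
    · rw [clip_apply, if_neg (lt_irrefl k), if_pos rfl, tailSum_eq_sum_Ico hN']
  · rw [Finset.Ico_eq_empty (by omega), Finset.sum_empty]

lemma dm_apply_zero (v : ℕ →₀ ℕ) : dm v 0 = 0 :=
  Finsupp.embDomain_of_notMem_range _ _ _ (by simp)

lemma dm_apply_succ (v : ℕ →₀ ℕ) (i : ℕ) : dm v (i + 1) = v i :=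
  Finsupp.embDomain_apply_self _ v i

lemma tailSum_dm (v : ℕ →₀ ℕ) (J : ℕ) : tailSum (dm v) J = tailSum v (J - 1) := by
  rw [tailSum, tailSum, dm, Finsupp.support_embDomain, Finset.filter_map, Finset.sum_map]
  refine Finset.sum_congr (Finset.filter_congr fun x _ => ?_) fun x _ => dm_apply_succ v x
  simp only [Function.comp_apply, Function.Embedding.coeFn_mk]
  omega

lemma tailSum_Bop (γ : ℕ → ℕ → (ℕ →₀ ℕ)) (n' : ℕ) (v : ℕ →₀ ℕ) (J : ℕ) :
    tailSum (Bop γ n' v) J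
      = ∑ j ∈ Finset.range (n' + 1), v j * tailSum (clip j (γ j n')) J :=
  (map_sum (tailSumHom J) _ _).trans
    (Finset.sum_congr rfl fun j _ => map_nsmul (tailSumHom J) (v j) _)

section HistLE

variable {v w v' w' : ℕ →₀ ℕ}

lemma HistLE.refl (v : ℕ →₀ ℕ) : HistLE v v := fun _ => le_rfl

lemma histLE_of_le (h : v ≤ w) : HistLE v w := fun J => by
  obtain ⟨N, hN⟩ := Finset.exists_nat_subset_range w.support
  rw [tailSum_eq_sum_Ico ((Finsupp.support_mono h).trans hN), tailSum_eq_sum_Ico hN]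
  exact Finset.sum_le_sum fun i _ => h i

lemma zero_histLE (w : ℕ →₀ ℕ) : HistLE 0 w := fun J => by simp [tailSum]

lemma single_histLE_single {a b : ℕ} (hab : a ≤ b) (c : ℕ) :
    HistLE (Finsupp.single a c) (Finsupp.single b c) := fun J => by
  rw [tailSum_single, tailSum_single]
  split_ifs <;> omega

lemma add_histLE_add (h : HistLE v w) (h' : HistLE v' w') : HistLE (v + v') (w + w') :=
  fun J => by
    rw [tailSum_add, tailSum_add]
    exact Nat.add_le_add (h J) (h' J)

lemma dm_histLE_dm (h : HistLE v w) : HistLE (dm v) (dm w) := fun J => by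
  rw [tailSum_dm, tailSum_dm]
  exact h (J - 1)

lemma clip_histLE_clip (h : HistLE v w) (k : ℕ) : HistLE (clip k v) (clip k w) := fun J => by
  rw [tailSum_clip, tailSum_clip]
  split_ifs
  exacts [h J, le_rfl]

end HistLE

theorem sum_mul_le_sum_mul_of_sum_Ico_le {N : ℕ} {v w b : ℕ → ℕ} (hb : Monotone b)
    (h : ∀ J, ∑ i ∈ Finset.Ico J N, v i ≤ ∑ i ∈ Finset.Ico J N, w i) :
    ∑ i ∈ Finset.range N, v i * b i ≤ ∑ i ∈ Finset.range N, w i * b i := by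
  induction N generalizing v w b with
  | zero => simp
  | succ N ih =>
    -- Abel summation, one step: split off `b 0` times the total mass and shift by one.
    have peel : ∀ u : ℕ → ℕ, ∑ i ∈ Finset.range (N + 1), u i * b i
        = ∑ i ∈ Finset.range N, u (i + 1) * (b (i + 1) - b 0)
          + (∑ i ∈ Finset.range (N + 1), u i) * b 0 := by
      intro u
      rw [Finset.sum_range_succ', Finset.sum_range_succ' u, add_mul, Finset.sum_mul,
        ← add_assoc, ← Finset.sum_add_distrib]
      congr 1
      refine Finset.sum_congr rfl fun i _ => ?_
      rw [← mul_add, Nat.sub_add_cancel (hb (Nat.zero_le _))]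
    rw [peel v, peel w]
    refine add_le_add (ih (fun i j hij => Nat.sub_le_sub_right (hb (by omega)) _) fun J => ?_) ?_
    · simpa only [Finset.sum_Ico_add'] using h (J + 1)
    · simpa only [Finset.range_eq_Ico] using Nat.mul_le_mul_right _ (h 0)

lemma monotone_tailSum_clip {c : ℕ → ℕ →₀ ℕ} (hc : ∀ j, HistLE (c j) (c (j + 1))) (J : ℕ) :
    Monotone fun j => tailSum (clip j (c j)) J :=
  monotone_nat_of_le_succ fun j => by
    simp only [tailSum_clip]
    split_ifs <;> first | exact hc j J | omega

theorem Bop_histLE_Bop {γ γ' : ℕ → ℕ → (ℕ →₀ ℕ)} {n' : ℕ} {v w : ℕ →₀ ℕ}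
    (hγ : ∀ j, HistLE (γ j n') (γ' j n')) (hγ' : ∀ j, HistLE (γ' j n') (γ' (j + 1) n'))
    (hv : v.support ⊆ Finset.range (n' + 1)) (hw : w.support ⊆ Finset.range (n' + 1))
    (hvw : HistLE v w) :
    HistLE (Bop γ n' v) (Bop γ' n' w) := fun J => by
  rw [tailSum_Bop, tailSum_Bop]
  calc _ ≤ ∑ j ∈ Finset.range (n' + 1), v j * tailSum (clip j (γ' j n')) J :=
        Finset.sum_le_sum fun j _ => Nat.mul_le_mul_left _ (clip_histLE_clip (hγ j) j J)
    _ ≤ _ := sum_mul_le_sum_mul_of_sum_Ico_le (monotone_tailSum_clip hγ' J) fun K => by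
        rw [← tailSum_eq_sum_Ico hv, ← tailSum_eq_sum_Ico hw]
        exact hvw K

theorem iterBound_histLE_iterBound {γ γ' : ℕ → ℕ → (ℕ →₀ ℕ)}
    (hγ : ∀ j n', HistLE (γ j n') (γ' j n')) (hγ' : ∀ j n', HistLE (γ' j n') (γ' (j + 1) n'))
    (n : ℕ → ℕ) (i : ℕ) :
    HistLE (iterBound γ n i) (iterBound γ' n i) := by
  induction i with
  | zero => exact HistLE.refl _
  | succ i ih =>
    exact Bop_histLE_Bop (hγ · _) (hγ' · _) Finsupp.support_onFinset_subset
      Finsupp.support_onFinset_subset (clip_histLE_clip ih _)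

lemma gammaSerra_apply (n n' i : ℕ) :
    gammaSerra n n' i = if n' - n ≤ i ∧ i ≤ n' then Nat.choose n' i else 0 := rfl

lemma support_gammaSerra_subset (n n' : ℕ) :
    (gammaSerra n n').support ⊆ Finset.range (n' + 1) :=
  Finsupp.support_onFinset_subset

lemma gammaSerra_min (n n' : ℕ) : gammaSerra (min n n') n' = gammaSerra n n' := by
  ext i
  simp only [gammaSerra_apply, show n' - min n n' = n' - n by omega]

lemma gammaSerra_zero_left (n' : ℕ) : gammaSerra 0 n' = Finsupp.single n' 1 := by
  ext i
  rw [gammaSerra_apply, Finsupp.single_apply]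
  split_ifs <;> first | omega | simp_all

lemma gammaSerra_le_succ (n n' : ℕ) : gammaSerra n n' ≤ gammaSerra (n + 1) n' := fun i => by
  simp only [gammaSerra_apply]
  split_ifs <;> omega

lemma gammaSerra_add_dm (n m : ℕ) :
    gammaSerra n m + dm (gammaSerra (n + 1) m) = gammaSerra (n + 1) (m + 1) := by
  ext i
  cases i with
  | zero =>
    simp only [Finsupp.add_apply, dm_apply_zero, gammaSerra_apply]
    split_ifs <;> first | omega | simp
  | succ i =>
    rw [Finsupp.add_apply, dm_apply_succ, gammaSerra_apply, gammaSerra_apply, gammaSerra_apply,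
      Nat.choose_succ_succ']
    split_ifs <;>
      first
        | omega
        | exact add_comm _ _
        | simp [Nat.choose_eq_zero_of_lt (show m < i + 1 by omega)]

lemma gammaOne_apply (n' i : ℕ) :
    gammaOne n' i = if i = n' then 1
      else if (n' + 1) / 2 ≤ i ∧ i < n' then 2
      else if i + 1 = (n' + 1) / 2 then n' % 2
      else 0 := rfl

lemma support_gammaOne_subset (n' : ℕ) : (gammaOne n').support ⊆ Finset.range (n' + 1) :=
  Finsupp.support_onFinset_subset

lemma tailSum_gammaOne_zero {n' : ℕ} (hn' : 1 ≤ n') : tailSum (gammaOne n') 0 = n' + 1 := by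
  obtain ⟨h, hh⟩ : ∃ h, (n' + 1) / 2 = h + 1 := ⟨(n' + 1) / 2 - 1, by omega⟩
  have low : ∀ i ∈ Finset.range h, gammaOne n' i = 0 := fun i hi => by
    rw [Finset.mem_range] at hi
    rw [gammaOne_apply]
    split_ifs <;> omega
  have mid : ∀ i ∈ Finset.Ico (h + 1) n', gammaOne n' i = 2 := fun i hi => by
    rw [Finset.mem_Ico] at hi
    rw [gammaOne_apply, if_neg (by omega), if_pos (by omega)]
  rw [tailSum_eq_sum_Ico (support_gammaOne_subset n'), ← Finset.range_eq_Ico,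
    Finset.sum_range_succ, ← Finset.sum_range_add_sum_Ico _ (show h + 1 ≤ n' by omega),
    Finset.sum_range_succ, Finset.sum_eq_zero low, Finset.sum_congr rfl mid, Finset.sum_const,
    Nat.card_Ico, smul_eq_mul, gammaOne_apply, gammaOne_apply]
  split_ifs <;> omega

lemma gammaOne_histLE_gammaSerra (n' : ℕ) : HistLE (gammaOne n') (gammaSerra 1 n') := by
  obtain rfl | ⟨p, rfl⟩ : n' = 0 ∨ ∃ p, n' = p + 1 := by cases n' <;> simp
  · have h : gammaOne 0 = gammaSerra 1 0 := by
      ext i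
      rw [gammaOne_apply, gammaSerra_apply]
      split_ifs <;> first | omega | simp_all
    exact h ▸ HistLE.refl _
  intro J
  rcases Nat.lt_or_ge J (p + 1) with hJ | hJ
  · calc tailSum (gammaOne (p + 1)) J ≤ tailSum (gammaOne (p + 1)) 0 :=
          tailSum_antitone _ (Nat.zero_le J)
      _ = tailSum (gammaSerra 1 (p + 1)) p := by
          rw [tailSum_gammaOne_zero (Nat.le_add_left 1 p),
            tailSum_eq_sum_Ico (support_gammaSerra_subset 1 (p + 1))]
          simp [Finset.sum_Ico_succ_top, gammaSerra_apply]
      _ ≤ tailSum (gammaSerra 1 (p + 1)) J := tailSum_antitone _ (by omega)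
  · rw [tailSum_eq_sum_Ico (support_gammaOne_subset _),
      tailSum_eq_sum_Ico (support_gammaSerra_subset 1 _)]
    refine (Finset.sum_congr rfl fun i hi => ?_).le
    obtain rfl : i = p + 1 := by simp only [Finset.mem_Ico] at hi; omega
    simp [gammaOne_apply, gammaSerra_apply]

theorem gammaOurs_histLE_gammaSerra (n n' : ℕ) : HistLE (gammaOurs n n') (gammaSerra n n') := by
  unfold gammaOurs
  induction n', n using gammaOursAux.induct with
  | case1 n' =>
    rw [gammaOursAux, gammaSerra_zero_left]
    exact single_histLE_single (Nat.zero_le n') 1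
  | case2 n' =>
    rw [gammaOursAux]
    exact gammaOne_histLE_gammaSerra n'
  | case3 n =>
    rw [gammaOursAux]
    exact zero_histLE _
  | case4 n =>
    rw [gammaOursAux, ← gammaSerra_min, show min (n + 2) 1 = 1 by omega]
    exact gammaOne_histLE_gammaSerra 1
  | case5 n' nn hn' ih₁ ih₂ =>
    rw [gammaSerra_min] at ih₁ ih₂
    rw [gammaOursAux.eq_5 n' nn hn', ← gammaSerra_add_dm]
    exact add_histLE_add ih₁ (dm_histLE_dm ih₂)

theorem statement19_general (L : ℕ) (n : ℕ → ℕ) :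
    l1 (iterBound gammaOurs n (L - 1)) ≤ l1 (iterBound gammaSerra n (L - 1)) := by
  rw [l1_eq_tailSum_zero, l1_eq_tailSum_zero]
  exact iterBound_histLE_iterBound gammaOurs_histLE_gammaSerra
    (fun j n' => histLE_of_le (gammaSerra_le_succ j n')) n (L - 1) 0

/-- the matrix-computation upper bound computed with `γ^{ours}` is at most
the one computed with `γ^{serra}`, for every depth `L ≥ 2` and widths `n_0, …, n_{L-1} ≥ 1`. -/
theorem statement19 (L : ℕ) (hL : 2 ≤ L) (n : ℕ → ℕ) (hn : ∀ i : ℕ, i < L → 1 ≤ n i) :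
    l1 (iterBound gammaOurs n (L - 1)) ≤ l1 (iterBound gammaSerra n (L - 1)) :=
  statement19_general L n
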